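/- arXiv:1004.0233 — 3 statements merged into one kernel-verified Lean document; each statement's English description precedes it below -/
import Mathlib

section
/- Let X and Y be Banach spaces with X reflexive and X compactly embedded in Y. Let G : X → Y be a linear, weakly-weakly continuous map, and Ψ : X → [0,∞) a 1-positively homogeneous, sequentially weakly lower-semicontinuous functional. Assume the compatibility condition: for all v ∈ X, if Gv = 0 and Ψ(v) = 0 then v = 0; and assume there is C ≥ 1 such that (1/C)(‖v‖_Y + ‖Gv‖_Y) ≤ ‖v‖_X ≤ C(‖v‖_Y + ‖Gv‖_Y) for all v ∈ X. Then there exists K > 0 such that ‖v‖_X ≤ K(‖Gv‖_Y + Ψ(v)) for all v ∈ X. -/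
open Filter Topology

/-- Generalized Poincaré inequality (Lemma 2.2).  `X` is a reflexive Banach space
(reflexivity is encoded through its consequence via Eberlein–Šmulian: every bounded
sequence has a weakly convergent subsequence), compactly embedded in `Y` via `e`.
`G` is linear and weakly-weakly continuous, `Ψ` is nonnegative, 1-positively
homogeneous and sequentially weakly lower semicontinuous.  Under the compatibility
and norm-equivalence assumptions, `‖v‖_X ≤ K (‖Gv‖_Y + Ψ v)`. -/
theorem generalized_poincare
    (X Y : Type*) [NormedAddCommGroup X] [NormedSpace ℝ X] [CompleteSpace X]
    [NormedAddCommGroup Y] [NormedSpace ℝ Y] [CompleteSpace Y]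
    (hrefl : ∀ u : ℕ → X, Bornology.IsBounded (Set.range u) →
      ∃ (φ : ℕ → ℕ) (x : X), StrictMono φ ∧
        ∀ f : X →L[ℝ] ℝ, Tendsto (fun n => f (u (φ n))) atTop (𝓝 (f x)))
    (e : X →L[ℝ] Y) (hecpt : IsCompactOperator e) (heinj : Function.Injective e)
    (G : X →ₗ[ℝ] Y)
    (hGweak : ∀ (u : ℕ → X) (x : X),
      (∀ f : X →L[ℝ] ℝ, Tendsto (fun n => f (u n)) atTop (𝓝 (f x))) →
      ∀ g : Y →L[ℝ] ℝ, Tendsto (fun n => g (G (u n))) atTop (𝓝 (g (G x))))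
    (Ψ : X → ℝ) (hΨnonneg : ∀ v, 0 ≤ Ψ v)
    (hΨhom : ∀ (c : ℝ), 0 ≤ c → ∀ v, Ψ (c • v) = c * Ψ v)
    (hΨlsc : ∀ (u : ℕ → X) (x : X),
      (∀ f : X →L[ℝ] ℝ, Tendsto (fun n => f (u n)) atTop (𝓝 (f x))) →
      Ψ x ≤ atTop.liminf (fun n => Ψ (u n)))
    (hcomp : ∀ v : X, G v = 0 → Ψ v = 0 → v = 0)
    (C : ℝ) (hC : 1 ≤ C)
    (hnorm : ∀ v : X,
      (1 / C) * (‖e v‖ + ‖G v‖) ≤ ‖v‖ ∧ ‖v‖ ≤ C * (‖e v‖ + ‖G v‖)) :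
    ∃ K : ℝ, 0 < K ∧ ∀ v : X, ‖v‖ ≤ K * (‖G v‖ + Ψ v) := by
  have hΨ0 : Ψ 0 = 0 := by
    have := hΨhom 0 le_rfl 0
    simpa using this
  by_contra hcon
  push_neg at hcon
  have hv : ∀ n : ℕ, ∃ v : X, ((n : ℝ) + 1) * (‖G v‖ + Ψ v) < ‖v‖ := by
    intro n
    obtain ⟨v, hv⟩ := hcon ((n : ℝ) + 1) (by positivity)
    exact ⟨v, hv⟩
  choose v hvlt using hv
  have hvne : ∀ n, v n ≠ 0 := by
    intro n h0
    have := hvlt n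
    rw [h0] at this
    simp [hΨ0] at this
  have hvpos : ∀ n, (0 : ℝ) < ‖v n‖ := fun n => norm_pos_iff.mpr (hvne n)
  set u : ℕ → X := fun n => ‖v n‖⁻¹ • v n with hu
  have hu1 : ∀ n, ‖u n‖ = 1 := by
    intro n
    rw [hu]
    simp only [norm_smul, norm_inv, norm_norm]
    exact inv_mul_cancel₀ (hvpos n).ne'
  have hsmall : ∀ n, ‖G (u n)‖ + Ψ (u n) < 1 / ((n : ℝ) + 1) := by
    intro n
    have hpos := hvpos n
    have heq : ‖G (u n)‖ + Ψ (u n) = ‖v n‖⁻¹ * (‖G (v n)‖ + Ψ (v n)) := by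
      rw [hu]
      simp only [map_smul, norm_smul, norm_inv, norm_norm,
        hΨhom _ (inv_nonneg.mpr hpos.le)]
      ring
    rw [heq]
    have h1 := hvlt n
    have hGΨ : 0 ≤ Ψ (v n) := hΨnonneg _
    rw [inv_mul_eq_div, div_lt_div_iff₀ hpos (by positivity : (0:ℝ) < (n:ℝ)+1)]
    nlinarith [h1]
  -- extract weakly convergent subsequence
  have hbdd : Bornology.IsBounded (Set.range u) := by
    rw [isBounded_iff_forall_norm_le]
    exact ⟨1, by rintro x ⟨n, rfl⟩; rw [hu1 n]⟩
  obtain ⟨φ, x, hφ, hweak⟩ := hrefl u hbdd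
  -- the small quantities tend to zero along the subsequence
  have hbound : ∀ n, ‖G (u (φ n))‖ + Ψ (u (φ n)) ≤ 1 / ((n : ℝ) + 1) := by
    intro n
    refine le_trans (hsmall (φ n)).le ?_
    apply one_div_le_one_div_of_le (by positivity)
    have hφn : (n : ℝ) ≤ (φ n : ℝ) := by exact_mod_cast hφ.le_apply
    linarith
  have hto0 : Tendsto (fun n => ‖G (u (φ n))‖ + Ψ (u (φ n))) atTop (𝓝 0) := by
    apply squeeze_zero (fun n => add_nonneg (norm_nonneg _) (hΨnonneg _)) hbound
    exact tendsto_one_div_add_atTop_nhds_zero_nat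
  have hG0 : Tendsto (fun n => ‖G (u (φ n))‖) atTop (𝓝 0) := by
    apply squeeze_zero (fun n => norm_nonneg _) (fun n => ?_) hto0
    nlinarith [hΨnonneg (u (φ n))]
  have hΨto0 : Tendsto (fun n => Ψ (u (φ n))) atTop (𝓝 0) := by
    apply squeeze_zero (fun n => hΨnonneg _) (fun n => ?_) hto0
    nlinarith [norm_nonneg (G (u (φ n)))]
  -- G x = 0
  have hGx : G x = 0 := by
    apply NormedSpace.eq_zero_of_forall_dual_eq_zero ℝ
    intro g
    have h1 := hGweak (fun n => u (φ n)) x hweak g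
    have h2 : Tendsto (fun n => g (G (u (φ n)))) atTop (𝓝 0) := by
      apply squeeze_zero_norm (fun n => g.le_opNorm _)
      simpa using hG0.const_mul ‖g‖
    exact tendsto_nhds_unique h1 h2
  -- Ψ x = 0
  have hΨx : Ψ x = 0 := by
    have hle := hΨlsc (fun n => u (φ n)) x hweak
    rw [hΨto0.liminf_eq] at hle
    exact le_antisymm hle (hΨnonneg x)
  have hx0 : x = 0 := hcomp x hGx hΨx
  subst hx0
  -- compactness: strong convergence of e ∘ u ∘ φ along a further subsequence
  obtain ⟨K, hKc, hKsub⟩ :=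
    hecpt.image_subset_compact_of_bounded (f := (e : X →ₛₗ[RingHom.id ℝ] Y))
      (S := Set.range (fun n => u (φ n))) (by
        rw [isBounded_iff_forall_norm_le]
        exact ⟨1, by rintro y ⟨n, rfl⟩; rw [hu1 (φ n)]⟩)
  have hmem : ∀ n, e (u (φ n)) ∈ K := fun n => hKsub ⟨u (φ n), ⟨n, rfl⟩, rfl⟩
  obtain ⟨y, _, ψ, hψ, hstrong⟩ := hKc.tendsto_subseq hmem
  -- y = 0, since e (u (φ (ψ n))) → 0 weakly
  have hy0 : y = 0 := by
    apply NormedSpace.eq_zero_of_forall_dual_eq_zero ℝ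
    intro g
    have h1 : Tendsto (fun n => g (e (u (φ (ψ n))))) atTop (𝓝 (g y)) :=
      (g.continuous.tendsto y).comp hstrong
    have h2 : Tendsto (fun n => g (e (u (φ (ψ n))))) atTop (𝓝 0) := by
      have := (hweak (g.comp e)).comp hψ.tendsto_atTop
      simpa [Function.comp_def] using this
    exact (tendsto_nhds_unique h1 h2).symm ▸ rfl
  rw [hy0] at hstrong
  have henorm : Tendsto (fun n => ‖e (u (φ (ψ n)))‖) atTop (𝓝 0) := by
    simpa using hstrong.norm
  have hGnorm : Tendsto (fun n => ‖G (u (φ (ψ n)))‖) atTop (𝓝 0) :=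
    hG0.comp hψ.tendsto_atTop
  have hsum : Tendsto (fun n => C * (‖e (u (φ (ψ n)))‖ + ‖G (u (φ (ψ n)))‖))
      atTop (𝓝 0) := by
    have := (henorm.add hGnorm).const_mul C
    simpa using this
  have hge : ∀ n, (1 : ℝ) ≤ C * (‖e (u (φ (ψ n)))‖ + ‖G (u (φ (ψ n)))‖) := by
    intro n
    have := (hnorm (u (φ (ψ n)))).2
    rwa [hu1] at this
  have : (1 : ℝ) ≤ 0 := ge_of_tendsto hsum (Eventually.of_forall hge)
  linarith
end

section
/- Let Ψ : ℝ → [0,∞) be convex, p ≥ 0, and c > 0, and suppose α : ℝ → ℝ satisfies α(r)·r − c|r|^{2p+2} = Ψ(r) for all r ∈ ℝ. Let (w_n) be a sequence in L^{2p+2}(Q) for a finite measure space Q with w_n ⇀ w weakly in L^{2p+2}(Q), lim_n ∫_Q α(w_n)w_n = ∫_Q α(w)w, and liminf_n ∫_Q Ψ(w_n) ≥ ∫_Q Ψ(w). Then ∫_Q |w_n|^{2p+2} → ∫_Q |w|^{2p+2}, and consequently w_n → w strongly in L^{2p+2}(Q). -/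
open Filter Topology MeasureTheory

lemma myMeasurableSign : Measurable Real.sign := by
  unfold Real.sign
  exact Measurable.ite (measurableSet_lt measurable_id measurable_const) measurable_const
    (Measurable.ite (measurableSet_lt measurable_const measurable_id) measurable_const
      measurable_const)

lemma myRpowSuperadd {x y r : ℝ} (hx : 0 ≤ x) (hy : 0 ≤ y) (hr : 1 ≤ r) :
    x ^ r + y ^ r ≤ (x + y) ^ r := by
  have h := NNReal.add_rpow_le_rpow_add x.toNNReal y.toNNReal hr
  have h2 := NNReal.coe_le_coe.2 h
  rw [NNReal.coe_add] at h2
  simpa [NNReal.coe_rpow, Real.coe_toNNReal x hx, Real.coe_toNNReal y hy,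
    ← Real.toNNReal_add hx hy, Real.coe_toNNReal _ (add_nonneg hx hy)] using h2

lemma myMidpoint {x y q : ℝ} (hx : 0 ≤ x) (hy : 0 ≤ y) (hq : 1 ≤ q) :
    2 ^ (1 - q) * (x + y) ^ q ≤ x ^ q + y ^ q := by
  have hconv := convexOn_rpow hq
  have hm := hconv.2 (Set.mem_Ici.2 hx) (Set.mem_Ici.2 hy)
      (by norm_num : (0:ℝ) ≤ 1/2) (by norm_num : (0:ℝ) ≤ 1/2) (by norm_num)
  simp only [smul_eq_mul] at hm
  have hdiv : ((x + y)/2) ^ q = (x + y) ^ q / 2 ^ q :=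
    Real.div_rpow (by linarith) (by norm_num : (0:ℝ) ≤ 2) q
  have h2 : (1:ℝ)/2 * x + 1/2 * y = (x + y)/2 := by ring
  rw [h2, hdiv] at hm
  have hpow : (2:ℝ) ^ (1 - q) = 2 / 2 ^ q := by
    rw [Real.rpow_sub (by norm_num) , Real.rpow_one]
  have h2q : (0:ℝ) < 2 ^ q := Real.rpow_pos_of_pos (by norm_num) q
  rw [hpow]
  rw [div_mul_eq_mul_div, div_le_iff₀ h2q]
  rw [div_le_iff₀ h2q] at hm
  nlinarith [hm]

lemma myA1 {q b h : ℝ} (hq : 2 ≤ q) (hb : 0 ≤ b) (hh : 0 ≤ h) :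
    b ^ q + q * b ^ (q - 1) * h + h ^ q ≤ (b + h) ^ q := by
  have hq1 : (1:ℝ) ≤ q := by linarith
  have hq1' : (1:ℝ) ≤ q - 1 := by linarith
  set F : ℝ → ℝ := fun t => (b + t) ^ q - b ^ q - q * b ^ (q-1) * t - t ^ q with hF
  have hderiv : ∀ t : ℝ,
      HasDerivAt F (q * (b + t) ^ (q-1) - q * b ^ (q-1) - q * t ^ (q-1)) t := by
    intro t
    have h1 : HasDerivAt (fun t : ℝ => (b + t) ^ q) (q * (b + t) ^ (q-1)) t := by
      have := (Real.hasDerivAt_rpow_const (x := b + t) (p := q) (Or.inr hq1)).comp t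
        ((hasDerivAt_id t).const_add b)
      exact this.congr_deriv (by ring)
    have h2 : HasDerivAt (fun t : ℝ => t ^ q) (q * t ^ (q-1)) t := by
      simpa using Real.hasDerivAt_rpow_const (x := t) (p := q) (Or.inr hq1)
    have h3 : HasDerivAt (fun t : ℝ => q * b ^ (q-1) * t) (q * b ^ (q-1)) t := by
      simpa using (hasDerivAt_id t).const_mul (q * b ^ (q-1))
    have := ((h1.sub (hasDerivAt_const t (b ^ q))).sub h3).sub h2
    exact this.congr_deriv (by ring)
  have hmono : MonotoneOn F (Set.Ici 0) := by
    apply monotoneOn_of_deriv_nonneg (convex_Ici 0)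
    · exact fun t _ => (hderiv t).differentiableAt.continuousAt.continuousWithinAt
    · exact fun t _ => (hderiv t).differentiableAt.differentiableWithinAt
    · intro t ht
      rw [interior_Ici, Set.mem_Ioi] at ht
      rw [(hderiv t).deriv]
      have hsup := myRpowSuperadd hb ht.le hq1'
      nlinarith [hsup, hq1]
  have h0 : F 0 = 0 := by
    simp [hF, Real.zero_rpow (by positivity : q ≠ 0)]
  have := hmono (Set.mem_Ici.2 le_rfl) (Set.mem_Ici.2 hh) hh
  rw [h0] at this
  simp only [hF] at this
  linarith

lemma myA2 {q b h : ℝ} (hq : 2 ≤ q) (hh : 0 ≤ h) (hhb : h ≤ b) :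
    h ^ q ≤ (b - h) ^ q - b ^ q + q * b ^ (q - 1) * h := by
  have hq1 : (1:ℝ) ≤ q := by linarith
  have hq1' : (1:ℝ) ≤ q - 1 := by linarith
  have hb : 0 ≤ b := le_trans hh hhb
  set G : ℝ → ℝ := fun t => (b - t) ^ q - b ^ q + q * b ^ (q-1) * t - t ^ q with hG
  have hderiv : ∀ t : ℝ,
      HasDerivAt G (-(q * (b - t) ^ (q-1)) + q * b ^ (q-1) - q * t ^ (q-1)) t := by
    intro t
    have h1 : HasDerivAt (fun t : ℝ => (b - t) ^ q) (-(q * (b - t) ^ (q-1))) t := by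
      have := (Real.hasDerivAt_rpow_const (x := b - t) (p := q) (Or.inr hq1)).comp t
        ((hasDerivAt_id t).const_sub b)
      exact this.congr_deriv (by ring)
    have h2 : HasDerivAt (fun t : ℝ => t ^ q) (q * t ^ (q-1)) t := by
      simpa using Real.hasDerivAt_rpow_const (x := t) (p := q) (Or.inr hq1)
    have h3 : HasDerivAt (fun t : ℝ => q * b ^ (q-1) * t) (q * b ^ (q-1)) t := by
      simpa using (hasDerivAt_id t).const_mul (q * b ^ (q-1))
    have := ((h1.sub (hasDerivAt_const t (b ^ q))).add h3).sub h2
    exact this.congr_deriv (by ring)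
  have hmono : MonotoneOn G (Set.Icc 0 b) := by
    apply monotoneOn_of_deriv_nonneg (convex_Icc 0 b)
    · exact fun t _ => (hderiv t).differentiableAt.continuousAt.continuousWithinAt
    · exact fun t _ => (hderiv t).differentiableAt.differentiableWithinAt
    · intro t ht
      rw [interior_Icc, Set.mem_Ioo] at ht
      rw [(hderiv t).deriv]
      have hsup := myRpowSuperadd (by linarith : (0:ℝ) ≤ b - t) ht.1.le hq1'
      rw [sub_add_cancel] at hsup
      nlinarith [hsup, hq1]
  have h0 : G 0 = 0 := by
    simp [hG, Real.zero_rpow (by positivity : q ≠ 0)]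
  have := hmono (Set.mem_Icc.2 ⟨le_rfl, hb⟩) (Set.mem_Icc.2 ⟨hh, hhb⟩) hh
  rw [h0] at this
  simp only [hG] at this
  linarith

lemma myKey0 {q : ℝ} (hq : 2 ≤ q) (a : ℝ) {b : ℝ} (hb : 0 ≤ b) :
    |b| ^ q + q * (Real.sign b * |b| ^ (q - 1)) * (a - b) + 2 ^ (1 - q) * |a - b| ^ q
      ≤ |a| ^ q := by
  have hq1 : (1:ℝ) ≤ q := by linarith
  have hq0 : q ≠ 0 := by positivity
  have hCle : (2:ℝ) ^ (1 - q) ≤ 1 :=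
    Real.rpow_le_one_of_one_le_of_nonpos (by norm_num) (by linarith)
  have hCpos : (0:ℝ) < 2 ^ (1 - q) := Real.rpow_pos_of_pos (by norm_num) _
  have hsgn : Real.sign b * |b| ^ (q - 1) = b ^ (q - 1) := by
    rcases hb.lt_or_eq with hb' | hb'
    · rw [Real.sign_of_pos hb', abs_of_pos hb', one_mul]
    · rw [← hb', Real.sign_zero, zero_mul, Real.zero_rpow (by linarith : q - 1 ≠ 0)]
  rw [hsgn, abs_of_nonneg hb]
  rcases le_or_gt b a with hab | hab
  · -- b ≤ a
    have ha : 0 ≤ a := le_trans hb hab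
    have hA1 := myA1 hq hb (sub_nonneg.2 hab)
    rw [add_sub_cancel] at hA1
    rw [abs_of_nonneg ha, abs_of_nonneg (sub_nonneg.2 hab)]
    have hJ : 0 ≤ (a - b) ^ q := Real.rpow_nonneg (sub_nonneg.2 hab) q
    nlinarith [hA1, hJ, hCle, hCpos]
  · rcases le_or_gt 0 a with ha | ha
    · -- 0 ≤ a < b
      have hA2 := myA2 hq (sub_nonneg.2 hab.le) (by linarith : b - a ≤ b)
      rw [show b - (b - a) = a by ring] at hA2
      rw [abs_of_nonneg ha, abs_of_nonpos (by linarith : a - b ≤ 0),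
        show -(a - b) = b - a by ring]
      have hJ : 0 ≤ (b - a) ^ q := Real.rpow_nonneg (by linarith) q
      nlinarith [hA2, hJ, hCle, hCpos]
    · -- a < 0 ≤ b
      set s : ℝ := -a with hs
      have hs0 : 0 ≤ s := by simp [hs]; linarith
      have hmid := myMidpoint hs0 hb hq1
      have habs : |a| = s := abs_of_neg ha
      have habs2 : |a - b| = s + b := by
        rw [abs_of_neg (by linarith : a - b < 0)]; simp [hs]; ring
      rw [habs, habs2]
      have hbq : b ^ (q - 1) * b = b ^ q := by
        have h := Real.rpow_add' hb (show q - 1 + 1 ≠ 0 by simpa using hq0)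
        rw [Real.rpow_one] at h
        rw [← h]; norm_num
      have hbq1 : 0 ≤ b ^ (q - 1) := Real.rpow_nonneg hb _
      have hbqnn : 0 ≤ b ^ q := Real.rpow_nonneg hb _
      -- need : b^q + q * b^(q-1) * (a - b) + C*(s+b)^q ≤ s^q
      -- a - b = -(s+b); C(s+b)^q ≤ s^q + b^q; q*b^(q-1)*(s+b) ≥ q*b^q ≥ 2*b^q
      have key : q * b ^ (q-1) * (s + b) ≥ 2 * b ^ q := by
        have e : q * b ^ (q-1) * (s + b) = q * (b ^ (q-1) * s) + q * b ^ q := by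
          rw [← hbq]; ring
        have h1 : 0 ≤ q * (b ^ (q-1) * s) :=
          mul_nonneg (by linarith) (mul_nonneg hbq1 hs0)
        have h2 : 0 ≤ (q - 2) * b ^ q := mul_nonneg (by linarith) hbqnn
        nlinarith [h1, h2, e]
      have hab' : a - b = -(s + b) := by simp [hs]; ring
      rw [hab']
      nlinarith [hmid, key]

lemma myKey {q : ℝ} (hq : 2 ≤ q) (a b : ℝ) :
    |b| ^ q + q * (Real.sign b * |b| ^ (q - 1)) * (a - b) + 2 ^ (1 - q) * |a - b| ^ q
      ≤ |a| ^ q := by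
  rcases le_or_gt 0 b with hb | hb
  · exact myKey0 hq a hb
  · have h := myKey0 hq (-a) (by linarith : (0:ℝ) ≤ -b)
    rw [abs_neg, abs_neg] at h
    rw [Real.sign_neg] at h
    rw [show -a - -b = -(a - b) by ring, abs_neg] at h
    calc |b| ^ q + q * (Real.sign b * |b| ^ (q - 1)) * (a - b) + 2 ^ (1-q) * |a - b| ^ q
        = |b| ^ q + q * (-Real.sign b * |b| ^ (q - 1)) * (-(a - b))
            + 2 ^ (1-q) * |a - b| ^ q := by ring
      _ ≤ |a| ^ q := h


lemma mySelfMul {x : ℝ} (hx : 0 ≤ x) {q : ℝ} (hq : 1 ≤ q) : x * x ^ (q - 1) = x ^ q := by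
  have h := Real.rpow_add' hx (show 1 + (q - 1) ≠ 0 by intro h; nlinarith)
  rw [Real.rpow_one] at h
  calc x * x ^ (q - 1) = x ^ (1 + (q - 1)) := h.symm
    _ = x ^ q := by norm_num

lemma myProdBound {q : ℝ} (hq : 2 ≤ q) (u v : ℝ) :
    |u| * |v| ^ (q - 1) ≤ |u| ^ q + |v| ^ q := by
  have hq1 : (1:ℝ) ≤ q := by linarith
  rcases le_total |u| |v| with h | h
  · calc |u| * |v| ^ (q - 1) ≤ |v| * |v| ^ (q - 1) :=
        mul_le_mul_of_nonneg_right h (Real.rpow_nonneg (abs_nonneg v) _)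
      _ = |v| ^ q := mySelfMul (abs_nonneg v) hq1
      _ ≤ |u| ^ q + |v| ^ q := le_add_of_nonneg_left (Real.rpow_nonneg (abs_nonneg u) _)
  · calc |u| * |v| ^ (q - 1) ≤ |u| * |u| ^ (q - 1) :=
        mul_le_mul_of_nonneg_left (Real.rpow_le_rpow (abs_nonneg v) h (by linarith))
          (abs_nonneg u)
      _ = |u| ^ q := mySelfMul (abs_nonneg u) hq1
      _ ≤ |u| ^ q + |v| ^ q := le_add_of_nonneg_right (Real.rpow_nonneg (abs_nonneg v) _)

lemma mySignAbs : ∀ r : ℝ, |Real.sign r| ≤ 1 := by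
  intro r
  rcases lt_trichotomy r 0 with h | h | h
  · rw [Real.sign_of_neg h]; norm_num
  · rw [h, Real.sign_zero]; norm_num
  · rw [Real.sign_of_pos h]; norm_num

lemma myMulSign : ∀ r : ℝ, r * Real.sign r = |r| := by
  intro r
  rcases lt_trichotomy r 0 with h | h | h
  · rw [Real.sign_of_neg h, abs_of_neg h]; ring
  · simp [h]
  · rw [Real.sign_of_pos h, abs_of_pos h]; ring

/-- Strong `L^{2p+2}` convergence from weak convergence plus convergence of the
`α`-energy, where `α(r)·r − c|r|^{2p+2} = Ψ(r)` with `Ψ` convex and nonnegative. -/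
theorem strong_convergence_from_energy
    {Q : Type*} [MeasurableSpace Q] (μ : Measure Q) [IsFiniteMeasure μ]
    (p c : ℝ) (hp : 0 ≤ p) (hc : 0 < c)
    (α Ψ : ℝ → ℝ) (hΨconv : ConvexOn ℝ Set.univ Ψ) (hΨnonneg : ∀ r, 0 ≤ Ψ r)
    (hαΨ : ∀ r : ℝ, α r * r - c * |r| ^ (2 * p + 2) = Ψ r)
    (w : ℕ → Q → ℝ) (wlim : Q → ℝ)
    (hw : ∀ n, MemLp (w n) (ENNReal.ofReal (2 * p + 2)) μ)
    (hwlim : MemLp wlim (ENNReal.ofReal (2 * p + 2)) μ)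
    (hweak : ∀ g : Q → ℝ, MemLp g (ENNReal.ofReal ((2 * p + 2) / (2 * p + 1))) μ →
      Tendsto (fun n => ∫ x, w n x * g x ∂μ) atTop (𝓝 (∫ x, wlim x * g x ∂μ)))
    (hα : Tendsto (fun n => ∫ x, α (w n x) * w n x ∂μ) atTop
      (𝓝 (∫ x, α (wlim x) * wlim x ∂μ)))
    (hαint : ∀ n, Integrable (fun x => α (w n x) * w n x) μ)
    (hαintlim : Integrable (fun x => α (wlim x) * wlim x) μ)
    (hΨint : ∀ n, Integrable (fun x => Ψ (w n x)) μ)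
    (hΨintlim : Integrable (fun x => Ψ (wlim x)) μ)
    (hliminf : (∫ x, Ψ (wlim x) ∂μ) ≤ atTop.liminf (fun n => ∫ x, Ψ (w n x) ∂μ)) :
    Tendsto (fun n => ∫ x, |w n x| ^ (2 * p + 2) ∂μ) atTop
      (𝓝 (∫ x, |wlim x| ^ (2 * p + 2) ∂μ)) ∧
    Tendsto (fun n => eLpNorm (fun x => w n x - wlim x) (ENNReal.ofReal (2 * p + 2)) μ)
      atTop (𝓝 0) := by
  set q : ℝ := 2 * p + 2 with hqdef
  have hq2 : (2:ℝ) ≤ q := by rw [hqdef]; linarith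
  have hq0 : (0:ℝ) < q := by linarith
  have hq1 : (1:ℝ) ≤ q := by linarith
  have hqne : q ≠ 0 := ne_of_gt hq0
  have hqE0 : ENNReal.ofReal q ≠ 0 := by
    simp only [ne_eq, ENNReal.ofReal_eq_zero, not_le]; linarith
  have hqET : ENNReal.ofReal q ≠ ⊤ := ENNReal.ofReal_ne_top
  -- integrability of the powers
  have hInt : ∀ n, Integrable (fun x => |w n x| ^ q) μ := by
    intro n
    have := (hw n).integrable_norm_rpow hqE0 hqET
    simpa [Real.norm_eq_abs, ENNReal.toReal_ofReal hq0.le] using this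
  have hIntLim : Integrable (fun x => |wlim x| ^ q) μ := by
    have := hwlim.integrable_norm_rpow hqE0 hqET
    simpa [Real.norm_eq_abs, ENNReal.toReal_ofReal hq0.le] using this
  have hmemsub : ∀ n, MemLp (fun x => w n x - wlim x) (ENNReal.ofReal q) μ :=
    fun n => (hw n).sub hwlim
  have hIntJ : ∀ n, Integrable (fun x => |w n x - wlim x| ^ q) μ := by
    intro n
    have := (hmemsub n).integrable_norm_rpow hqE0 hqET
    simpa [Real.norm_eq_abs, ENNReal.toReal_ofReal hq0.le] using this
  -- the dual test function
  set g : Q → ℝ := fun x => Real.sign (wlim x) * |wlim x| ^ (q - 1) with hgdef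
  have hgsm : AEStronglyMeasurable g μ := by
    have hm : AEMeasurable wlim μ := hwlim.1.aemeasurable
    have hF : Measurable fun r : ℝ => Real.sign r * |r| ^ (q - 1) :=
      myMeasurableSign.mul
        (((Real.continuous_rpow_const (by linarith : (0:ℝ) ≤ q - 1)).comp
          continuous_abs).measurable)
    exact (hF.comp_aemeasurable hm).aestronglyMeasurable
  have hgbd : ∀ x, |g x| ≤ |wlim x| ^ (q - 1) := by
    intro x
    rw [hgdef]
    simp only [abs_mul]
    calc |Real.sign (wlim x)| * |(|wlim x| ^ (q - 1))|
        ≤ 1 * |(|wlim x| ^ (q - 1))| :=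
          mul_le_mul_of_nonneg_right (mySignAbs _) (abs_nonneg _)
      _ = |wlim x| ^ (q - 1) := by
          rw [one_mul, abs_of_nonneg (Real.rpow_nonneg (abs_nonneg _) _)]
  have hgmem : MemLp g (ENNReal.ofReal (q / (2 * p + 1))) μ := by
    have h1 := hwlim.norm_rpow_div (ENNReal.ofReal (q - 1))
    rw [ENNReal.toReal_ofReal (by linarith : (0:ℝ) ≤ q - 1)] at h1
    have hdiv : ENNReal.ofReal q / ENNReal.ofReal (q - 1)
        = ENNReal.ofReal (q / (2 * p + 1)) := by
      rw [← ENNReal.ofReal_div_of_pos (by linarith : (0:ℝ) < q - 1)]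
      congr 1
      rw [hqdef]; ring_nf
    rw [hdiv] at h1
    refine MemLp.of_le h1 hgsm (Filter.Eventually.of_forall fun x => ?_)
    simp only [Real.norm_eq_abs]
    calc |g x| ≤ |wlim x| ^ (q - 1) := hgbd x
      _ = |(|wlim x| ^ (q - 1))| := (abs_of_nonneg (Real.rpow_nonneg (abs_nonneg _) _)).symm
  -- pointwise identity wlim * g = |wlim| ^ q
  have hwg : ∀ x, wlim x * g x = |wlim x| ^ q := by
    intro x
    rw [hgdef]
    calc wlim x * (Real.sign (wlim x) * |wlim x| ^ (q - 1))
        = (wlim x * Real.sign (wlim x)) * |wlim x| ^ (q - 1) := by ring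
      _ = |wlim x| * |wlim x| ^ (q - 1) := by rw [myMulSign]
      _ = |wlim x| ^ q := mySelfMul (abs_nonneg _) hq1
  -- integrability of products
  have hmuln : ∀ n, Integrable (fun x => w n x * g x) μ := by
    intro n
    refine Integrable.mono' ((hInt n).add hIntLim) ((hw n).1.mul hgsm)
      (Filter.Eventually.of_forall fun x => ?_)
    rw [Real.norm_eq_abs, abs_mul]
    calc |w n x| * |g x| ≤ |w n x| * |wlim x| ^ (q - 1) :=
        mul_le_mul_of_nonneg_left (hgbd x) (abs_nonneg _)
      _ ≤ |w n x| ^ q + |wlim x| ^ q := myProdBound hq2 _ _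
  have hmullim : Integrable (fun x => wlim x * g x) μ := by
    have he : (fun x => wlim x * g x) = fun x => |wlim x| ^ q := funext hwg
    rw [he]; exact hIntLim
  -- abbreviations
  set I : ℕ → ℝ := fun n => ∫ x, |w n x| ^ q ∂μ with hIdef
  set Ival : ℝ := ∫ x, |wlim x| ^ q ∂μ with hIvaldef
  set J : ℕ → ℝ := fun n => ∫ x, |w n x - wlim x| ^ q ∂μ with hJdef
  set S : ℕ → ℝ := fun n => ∫ x, w n x * g x ∂μ with hSdef
  have hCpos : (0:ℝ) < 2 ^ (1 - q) := Real.rpow_pos_of_pos (by norm_num) _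
  have hJnn : ∀ n, 0 ≤ J n := fun n =>
    integral_nonneg fun x => Real.rpow_nonneg (abs_nonneg _) q
  have hPnn : ∀ n, 0 ≤ ∫ x, Ψ (w n x) ∂μ := fun n =>
    integral_nonneg fun x => hΨnonneg _
  -- integrated key inequality
  have hkey : ∀ n, Ival + q * (S n - Ival) + 2 ^ (1 - q) * J n ≤ I n := by
    intro n
    have hptw : ∀ x, |wlim x| ^ q + q * (w n x * g x - wlim x * g x)
        + 2 ^ (1 - q) * |w n x - wlim x| ^ q ≤ |w n x| ^ q := by
      intro x
      have h := myKey hq2 (w n x) (wlim x)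
      have e : q * (Real.sign (wlim x) * |wlim x| ^ (q - 1)) * (w n x - wlim x)
          = q * (w n x * g x - wlim x * g x) := by rw [hgdef]; ring
      rw [e] at h
      exact h
    have hint1 : Integrable (fun x => w n x * g x - wlim x * g x) μ :=
      (hmuln n).sub hmullim
    have hintB : Integrable (fun x => q * (w n x * g x - wlim x * g x)) μ :=
      hint1.const_mul q
    have hintD : Integrable (fun x => (2:ℝ) ^ (1 - q) * |w n x - wlim x| ^ q) μ :=
      (hIntJ n).const_mul _
    have hint0 : Integrable
        (fun x => |wlim x| ^ q + q * (w n x * g x - wlim x * g x)) μ := by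
      exact hIntLim.add hintB
    have hintLHS : Integrable
        (fun x => |wlim x| ^ q + q * (w n x * g x - wlim x * g x)
          + 2 ^ (1 - q) * |w n x - wlim x| ^ q) μ := by
      exact hint0.add hintD
    have hmono := integral_mono hintLHS (hInt n) hptw
    rw [integral_add hint0 hintD, integral_add hIntLim hintB,
      integral_const_mul, integral_const_mul, integral_sub (hmuln n) hmullim] at hmono
    have hwgint : ∫ x, wlim x * g x ∂μ = Ival := by
      rw [hIvaldef]; exact integral_congr_ae (Filter.Eventually.of_forall hwg)
    rw [hwgint] at hmono
    exact hmono
  -- energy identities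
  have henergy : ∀ n, ∫ x, α (w n x) * w n x ∂μ = (∫ x, Ψ (w n x) ∂μ) + c * I n := by
    intro n
    have he : (fun x => α (w n x) * w n x) = fun x => Ψ (w n x) + c * |w n x| ^ q := by
      funext x
      have := hαΨ (w n x)
      linarith
    rw [he, integral_add (hΨint n) ((hInt n).const_mul c), integral_const_mul]
  have henergylim : ∫ x, α (wlim x) * wlim x ∂μ = (∫ x, Ψ (wlim x) ∂μ) + c * Ival := by
    have he : (fun x => α (wlim x) * wlim x) = fun x => Ψ (wlim x) + c * |wlim x| ^ q := by
      funext x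
      have := hαΨ (wlim x)
      linarith
    rw [he, integral_add hΨintlim (hIntLim.const_mul c), integral_const_mul]
  set Plim : ℝ := ∫ x, Ψ (wlim x) ∂μ with hPlimdef
  have hAlim : Tendsto (fun n => ∫ x, α (w n x) * w n x ∂μ) atTop
      (𝓝 (Plim + c * Ival)) := by
    rw [← henergylim]; exact hα
  -- weak convergence of S
  have hS : Tendsto S atTop (𝓝 Ival) := by
    have h := hweak g hgmem
    have hwgint : ∫ x, wlim x * g x ∂μ = Ival := by
      rw [hIvaldef]; exact integral_congr_ae (Filter.Eventually.of_forall hwg)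
    rw [hwgint] at h
    exact h
  -- upper bound for I
  have hupper : ∀ ε > (0:ℝ), ∀ᶠ n in atTop, I n < Ival + ε := by
    intro ε hε
    have h1 : ∀ᶠ n in atTop,
        (∫ x, α (w n x) * w n x ∂μ) < Plim + c * Ival + c * ε / 2 :=
      (tendsto_order.1 hAlim).2 _ (by nlinarith)
    have h2 : ∀ᶠ n in atTop, Plim - c * ε / 2 < ∫ x, Ψ (w n x) ∂μ := by
      have hlt : Plim - c * ε / 2 < atTop.liminf (fun n => ∫ x, Ψ (w n x) ∂μ) :=
        lt_of_lt_of_le (by nlinarith) hliminf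
      exact eventually_lt_of_lt_liminf hlt
        (Filter.isBoundedUnder_of ⟨0, fun n => hPnn n⟩)
    filter_upwards [h1, h2] with n h1 h2
    have he := henergy n
    have hlt : c * I n < c * (Ival + ε) := by nlinarith
    exact lt_of_mul_lt_mul_left (by linarith) hc.le
  -- lower bound for I
  have hlower : ∀ ε > (0:ℝ), ∀ᶠ n in atTop, Ival - ε < I n := by
    intro ε hε
    have hεq : (0:ℝ) < ε / q := by positivity
    have h1 : ∀ᶠ n in atTop, Ival - ε / q < S n :=
      (tendsto_order.1 hS).1 _ (by linarith)
    filter_upwards [h1] with n h1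
    have hk := hkey n
    have hqd : q * (ε / q) = ε := by field_simp
    have h3 : q * (S n - Ival) > -ε := by nlinarith
    nlinarith [mul_nonneg hCpos.le (hJnn n)]
  have hI : Tendsto I atTop (𝓝 Ival) :=
    tendsto_order.2
      ⟨fun b hb => by
        filter_upwards [hlower (Ival - b) (by linarith)] with n h; linarith,
       fun b hb => by
        filter_upwards [hupper (b - Ival) (by linarith)] with n h; linarith⟩
  -- J tends to 0
  have hU : Tendsto (fun n => (I n - Ival - q * (S n - Ival)) / 2 ^ (1 - q)) atTop
      (𝓝 0) := by
    have h1 : Tendsto (fun n => I n - Ival - q * (S n - Ival)) atTop (𝓝 0) := by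
      have h := (hI.sub (tendsto_const_nhds (x := Ival))).sub
        ((hS.sub (tendsto_const_nhds (x := Ival))).const_mul q)
      simpa using h
    simpa using h1.div_const ((2:ℝ) ^ (1 - q))
  have hJ : Tendsto J atTop (𝓝 0) :=
    tendsto_of_tendsto_of_tendsto_of_le_of_le tendsto_const_nhds hU hJnn
      (fun n => (le_div_iff₀ hCpos).2 (by linarith [hkey n]))
  constructor
  · exact hI
  · -- strong convergence
    have hsnorm : ∀ n, eLpNorm (fun x => w n x - wlim x) (ENNReal.ofReal q) μ
        = ENNReal.ofReal (J n) ^ (1 / q) := by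
      intro n
      rw [eLpNorm_eq_lintegral_rpow_enorm_toReal hqE0 hqET, ENNReal.toReal_ofReal hq0.le]
      congr 1
      rw [hJdef]
      rw [ofReal_integral_eq_lintegral_ofReal (hIntJ n)
        (Filter.Eventually.of_forall fun x => Real.rpow_nonneg (abs_nonneg _) q)]
      refine lintegral_congr fun x => ?_
      rw [Real.enorm_eq_ofReal_abs,
        ENNReal.ofReal_rpow_of_nonneg (abs_nonneg _) hq0.le]
    have h1 : Tendsto (fun n => ENNReal.ofReal (J n)) atTop (𝓝 0) := by
      have h := (ENNReal.continuous_ofReal.tendsto 0).comp hJ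
      rw [ENNReal.ofReal_zero] at h
      exact h
    have h2 : Tendsto (fun n => ENNReal.ofReal (J n) ^ (1 / q)) atTop (𝓝 0) := by
      have h := ((ENNReal.continuous_rpow_const (y := 1 / q)).tendsto 0).comp h1
      rw [show ((0:ENNReal) ^ (1 / q)) = 0 from
        ENNReal.zero_rpow_of_pos (by positivity)] at h
      exact h
    simp_rw [hsnorm]
    exact h2
end

section
/- Let a < 0 < b (possibly infinite), and let φ : (a,b) → ℝ be continuous with lim_{r→a⁺} φ(r) = −∞ and lim_{r→b⁻} φ(r) = +∞. Then for every m ∈ (a,b) there exist constants C_m, C'_m > 0 such that for all r with r + m ∈ (a,b), |φ(r+m)| ≤ C_m·φ(r+m)·r + C'_m. -/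
open Filter Topology

/-- Estimate (2.7) of the paper: if `φ` is continuous on `(a,b)` (possibly infinite
endpoints, `a < 0 < b`) with `φ → −∞` at `a` and `φ → +∞` at `b`, then for every
`m ∈ (a,b)` there are `C_m, C'_m > 0` with
`|φ(r+m)| ≤ C_m φ(r+m) r + C'_m` whenever `r + m ∈ (a,b)`. -/
theorem phi_mean_estimate (a b : EReal) (φ : ℝ → ℝ)
    (ha : a < 0) (hb : 0 < b)
    (hcont : ContinuousOn φ {r : ℝ | a < (r : EReal) ∧ (r : EReal) < b})
    (hlima : Tendsto φ (comap (fun r : ℝ => (r : EReal)) (𝓝[>] a)) atBot)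
    (hlimb : Tendsto φ (comap (fun r : ℝ => (r : EReal)) (𝓝[<] b)) atTop) :
    ∀ m : ℝ, a < (m : EReal) → (m : EReal) < b →
      ∃ Cm Cm' : ℝ, 0 < Cm ∧ 0 < Cm' ∧
        ∀ r : ℝ, a < ((r + m : ℝ) : EReal) → ((r + m : ℝ) : EReal) < b →
          |φ (r + m)| ≤ Cm * (φ (r + m) * r) + Cm' := by
  intro m ham hmb
  -- choose α near a with φ ≤ -1 on (a, α)
  obtain ⟨Sa, hSa, hSa'⟩ :=
    Filter.mem_comap.mp (hlima.eventually (eventually_le_atBot (-1)))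
  obtain ⟨u, ⟨hau, hum⟩, hIooa⟩ :=
    (mem_nhdsGT_iff_exists_mem_Ioc_Ioo_subset ham).mp hSa
  obtain ⟨α, haα, hαu⟩ := EReal.lt_iff_exists_real_btwn.mp hau
  -- choose β near b with φ ≥ 1 on (β, b)
  obtain ⟨Sb, hSb, hSb'⟩ :=
    Filter.mem_comap.mp (hlimb.eventually (eventually_ge_atTop 1))
  obtain ⟨l, ⟨hml, hlb⟩, hIoob⟩ :=
    (mem_nhdsLT_iff_exists_mem_Ico_Ioo_subset hmb).mp hSb
  obtain ⟨β, hlβ, hβb⟩ := EReal.lt_iff_exists_real_btwn.mp hlb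
  have hαm : α < m := by
    have : (α : EReal) < (m : EReal) := lt_of_lt_of_le hαu hum
    exact_mod_cast this
  have hmβ : m < β := by
    have : (m : EReal) < (β : EReal) := lt_of_le_of_lt hml hlβ
    exact_mod_cast this
  have hneg : ∀ s : ℝ, a < (s : EReal) → s < α → φ s ≤ -1 := by
    intro s hs hsα
    exact hSa' (hIooa ⟨hs, lt_trans (show (s:EReal) < (α:EReal) by exact_mod_cast hsα) hαu⟩)
  have hpos : ∀ s : ℝ, (s : EReal) < b → β < s → 1 ≤ φ s := by
    intro s hs hβs
    exact hSb' (hIoob ⟨lt_trans hlβ (show (β:EReal) < (s:EReal) by exact_mod_cast hβs), hs⟩)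
  -- bound on the compact middle part
  have hsubset : Set.Icc α β ⊆ {r : ℝ | a < (r : EReal) ∧ (r : EReal) < b} := by
    intro s ⟨h1, h2⟩
    exact ⟨lt_of_lt_of_le haα (by exact_mod_cast h1),
      lt_of_le_of_lt (by exact_mod_cast h2) hβb⟩
  obtain ⟨C, hC⟩ := isCompact_Icc.exists_bound_of_continuousOn (hcont.mono hsubset)
  set K : ℝ := max C 0 with hKdef
  have hK0 : 0 ≤ K := le_max_right _ _
  have hCK : ∀ s ∈ Set.Icc α β, |φ s| ≤ K := fun s hs =>
    le_trans (hC s hs) (le_max_left _ _)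
  set D : ℝ := β - α with hDdef
  have hD0 : 0 < D := by simp only [hDdef]; linarith
  set Cm : ℝ := max (1 / (m - α)) (1 / (β - m)) with hCmdef
  have hCm0 : 0 < Cm := by
    have h : (0:ℝ) < m - α := by linarith
    exact lt_of_lt_of_le (by positivity) (le_max_left _ _)
  have hCm1 : 1 ≤ Cm * (m - α) := by
    rw [← div_le_iff₀ (by linarith : (0:ℝ) < m - α), div_eq_mul_inv, one_mul,
      ← one_div]
    exact le_max_left _ _
  have hCm2 : 1 ≤ Cm * (β - m) := by
    rw [← div_le_iff₀ (by linarith : (0:ℝ) < β - m), div_eq_mul_inv, one_mul,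
      ← one_div]
    exact le_max_right _ _
  refine ⟨Cm, K + Cm * (K * D) + 1, hCm0, by positivity, ?_⟩
  intro r har hrb
  set s : ℝ := r + m with hsdef
  rcases lt_or_ge s α with hcase | hcase
  · -- left tail : φ s ≤ -1
    have hφ := hneg s har hcase
    have hr : r < α - m := by simp only [hsdef] at hcase ⊢; linarith
    have habs : |φ s| = -φ s := abs_of_nonpos (by linarith)
    have key : -φ s ≤ Cm * (φ s * r) := by
      nlinarith [mul_le_mul_of_nonneg_left (show m - α ≤ -r by linarith)
        (show (0:ℝ) ≤ -φ s by linarith),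
        mul_le_mul_of_nonneg_right hCm1 (show (0:ℝ) ≤ -φ s by linarith)]
    rw [habs]
    nlinarith [mul_nonneg hCm0.le (mul_nonneg hK0 hD0.le)]
  rcases le_or_gt s β with hcase' | hcase'
  · -- middle : |φ s| ≤ K
    have hφ := hCK s ⟨hcase, hcase'⟩
    have h1 : |φ s * r| ≤ K * D := by
      rw [abs_mul]
      apply mul_le_mul hφ _ (abs_nonneg _) hK0
      rw [abs_le]
      constructor <;> simp only [hsdef, hDdef] at * <;> linarith
    have h2 : -(K * D) ≤ φ s * r := (abs_le.mp h1).1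
    have h3 : Cm * (-(K * D)) ≤ Cm * (φ s * r) :=
      mul_le_mul_of_nonneg_left h2 hCm0.le
    nlinarith
  · -- right tail : φ s ≥ 1
    have hφ := hpos s hrb hcase'
    have hr : β - m < r := by simp only [hsdef] at hcase' ⊢; linarith
    have habs : |φ s| = φ s := abs_of_nonneg (by linarith)
    have key : φ s ≤ Cm * (φ s * r) := by
      nlinarith [mul_le_mul_of_nonneg_left (show β - m ≤ r by linarith)
        (show (0:ℝ) ≤ φ s by linarith),
        mul_le_mul_of_nonneg_right hCm2 (show (0:ℝ) ≤ φ s by linarith)]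
    rw [habs]
    nlinarith [mul_nonneg hCm0.le (mul_nonneg hK0 hD0.le)]
end
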